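/- Let x, y, z, w be the vertices of a convex quadrilateral in the plane (in this cyclic order), and let p be the intersection point of the diagonals xz and yw. Then p lies in all four disks D(x,y), D(y,z), D(z,w), D(w,x) after possibly relabeling, i.e., there exists a Hamiltonian cycle on the four points all of whose edge-disks contain p. -/

import Mathlib

/-!
A point `q` lies in the disk with diameter `ab` iff `⟪a - q, b - q⟫ ≤ 0` (Thales). Since `p` lies
on both diagonals, the disks on the diagonals contain `p`, and `x - p`, `z - p` point in opposite
directions, as do `y - p`, `w - p`. Hence in the sign pattern of the four products
`⟪x - p, y - p⟫, ⟪x - p, w - p⟫, ⟪z - p, y - p⟫, ⟪z - p, w - p⟫` neighbours never share a strict sign,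
so either the sides `xy`, `zw` or the sides `xw`, `zy` have nonpositive products: the cycle
`x y w z` or `x z y w` then works.
-/

open Real

/-- The closed disk with diameter segment `ab`. -/
def diskD (a b : EuclideanSpace ℝ (Fin 2)) : Set (EuclideanSpace ℝ (Fin 2)) :=
  Metric.closedBall (midpoint ℝ a b) (dist a b / 2)

open scoped RealInnerProductSpace

section InnerProductSpace

variable {E : Type*} [NormedAddCommGroup E] [InnerProductSpace ℝ E]

theorem mem_closedBall_midpoint_iff_inner_nonpos (a b q : E) :
    q ∈ Metric.closedBall (midpoint ℝ a b) (dist a b / 2) ↔ ⟪a - q, b - q⟫ ≤ 0 := by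
  have hm : q - midpoint ℝ a b = (-2⁻¹ : ℝ) • ((a - q) + (b - q)) := by
    rw [midpoint_eq_smul_add, invOf_eq_inv]; module
  have hab : a - b = (a - q) - (b - q) := by abel
  have hpolar (u v : E) : ‖(-2⁻¹ : ℝ) • (u + v)‖ ^ 2 = (‖u - v‖ / 2) ^ 2 + ⟪u, v⟫ := by
    rw [norm_smul, mul_pow, div_pow, norm_add_sq_real, norm_sub_sq_real]
    norm_num; ring
  have hsq : ‖q - midpoint ℝ a b‖ ^ 2 = (‖a - b‖ / 2) ^ 2 + ⟪a - q, b - q⟫ := by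
    rw [hm, hab, hpolar]
  rw [Metric.mem_closedBall, dist_eq_norm, dist_eq_norm,
    ← sq_le_sq₀ (norm_nonneg _) (by positivity), hsq, add_le_iff_nonpos_right]

theorem exists_sub_eq_smul_of_mem_segment {a b p : E} (hp : p ∈ segment ℝ a b) :
    ∃ θ ∈ Set.Icc (0 : ℝ) 1, a - p = (-θ) • (b - a) ∧ b - p = (1 - θ) • (b - a) := by
  rw [segment_eq_image'] at hp
  obtain ⟨θ, hθ, rfl⟩ := hp
  exact ⟨θ, hθ, by module, by module⟩

theorem inner_sub_sub_nonpos_of_mem_segment {a b p : E} (hp : p ∈ segment ℝ a b) :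
    ⟪a - p, b - p⟫ ≤ 0 := by
  obtain ⟨θ, ⟨hθ₀, hθ₁⟩, ha, hb⟩ := exists_sub_eq_smul_of_mem_segment hp
  rw [ha, hb, real_inner_smul_left, real_inner_smul_right, real_inner_self_eq_norm_sq]
  have : 0 ≤ θ * (1 - θ) * ‖b - a‖ ^ 2 := by have := sub_nonneg.2 hθ₁; positivity
  linarith

theorem inner_sub_mul_inner_sub_nonpos_of_mem_segment {a b p : E} (hp : p ∈ segment ℝ a b)
    (v : E) : ⟪a - p, v⟫ * ⟪b - p, v⟫ ≤ 0 := by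
  obtain ⟨θ, ⟨hθ₀, hθ₁⟩, ha, hb⟩ := exists_sub_eq_smul_of_mem_segment hp
  rw [ha, hb, real_inner_smul_left, real_inner_smul_left]
  have : 0 ≤ θ * (1 - θ) * ⟪b - a, v⟫ ^ 2 := by have := sub_nonneg.2 hθ₁; positivity
  linarith

end InnerProductSpace

theorem nonpos_diag_or_nonpos_antidiag_of_mul_nonpos {a b c d : ℝ} (hab : a * b ≤ 0)
    (hcd : c * d ≤ 0) (hac : a * c ≤ 0) (hbd : b * d ≤ 0) :
    (a ≤ 0 ∧ d ≤ 0) ∨ (b ≤ 0 ∧ c ≤ 0) := by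
  by_cases ha : 0 < a
  · exact .inr ⟨nonpos_of_mul_nonpos_right hab ha, nonpos_of_mul_nonpos_right hac ha⟩
  by_cases hd : 0 < d
  · exact .inr ⟨nonpos_of_mul_nonpos_left hbd hd, nonpos_of_mul_nonpos_left hcd hd⟩
  exact .inl ⟨not_lt.1 ha, not_lt.1 hd⟩

section FourCycles

variable {α : Type*} (R : α → α → Prop) {x y z w : α}

theorem exists_perm_cycle_xywz (hxy : R x y) (hyw : R y w) (hwz : R w z) (hzx : R z x) :
    ∃ σ : Equiv.Perm (Fin 4), ∀ i, R (![x, y, z, w] (σ i)) (![x, y, z, w] (σ (i + 1))) :=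
  ⟨Equiv.swap 2 3, fun i => by fin_cases i <;> assumption⟩

theorem exists_perm_cycle_xzyw (hxz : R x z) (hzy : R z y) (hyw : R y w) (hwx : R w x) :
    ∃ σ : Equiv.Perm (Fin 4), ∀ i, R (![x, y, z, w] (σ i)) (![x, y, z, w] (σ (i + 1))) :=
  ⟨Equiv.swap 1 2, fun i => by fin_cases i <;> assumption⟩

end FourCycles

theorem mem_diskD_iff {a b q : EuclideanSpace ℝ (Fin 2)} :
    q ∈ diskD a b ↔ ⟪a - q, b - q⟫ ≤ 0 :=
  mem_closedBall_midpoint_iff_inner_nonpos a b q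

theorem convex_quadrilateral_diagonal_point_tverberg_general
    (x y z w p : EuclideanSpace ℝ (Fin 2))
    (hp₁ : p ∈ segment ℝ x z) (hp₂ : p ∈ segment ℝ y w) :
    ∃ σ : Equiv.Perm (Fin 4),
      ∀ i : Fin 4, p ∈ diskD (![x, y, z, w] (σ i)) (![x, y, z, w] (σ (i + 1))) := by
  have hxz := inner_sub_sub_nonpos_of_mem_segment hp₁
  have hyw := inner_sub_sub_nonpos_of_mem_segment hp₂
  rcases nonpos_diag_or_nonpos_antidiag_of_mul_nonpos
      (by simpa only [real_inner_comm (x - p)] using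
        inner_sub_mul_inner_sub_nonpos_of_mem_segment hp₂ (x - p))
      (by simpa only [real_inner_comm (z - p)] using
        inner_sub_mul_inner_sub_nonpos_of_mem_segment hp₂ (z - p))
      (inner_sub_mul_inner_sub_nonpos_of_mem_segment hp₁ (y - p))
      (inner_sub_mul_inner_sub_nonpos_of_mem_segment hp₁ (w - p))
    with ⟨hxy, hzw⟩ | ⟨hxw, hzy⟩
  · exact exists_perm_cycle_xywz (fun a b => p ∈ diskD a b) (mem_diskD_iff.2 hxy)
      (mem_diskD_iff.2 hyw) (mem_diskD_iff.2 ((real_inner_comm _ _).trans_le hzw))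
      (mem_diskD_iff.2 ((real_inner_comm _ _).trans_le hxz))
  · exact exists_perm_cycle_xzyw (fun a b => p ∈ diskD a b) (mem_diskD_iff.2 hxz)
      (mem_diskD_iff.2 hzy) (mem_diskD_iff.2 hyw)
      (mem_diskD_iff.2 ((real_inner_comm _ _).trans_le hxw))

/-- For a convex quadrilateral `x y z w` (in this cyclic order), the intersection
point `p` of the diagonals lies in all four disks of some Hamiltonian cycle on the
four vertices. -/
theorem convex_quadrilateral_diagonal_point_tverberg
    (x y z w p : EuclideanSpace ℝ (Fin 2))
    (hxy : x ≠ y) (hxz : x ≠ z) (hxw : x ≠ w) (hyz : y ≠ z) (hyw : y ≠ w) (hzw : z ≠ w)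
    (hp₁ : p ∈ segment ℝ x z) (hp₂ : p ∈ segment ℝ y w)
    (hpx : p ≠ x) (hpy : p ≠ y) (hpz : p ≠ z) (hpw : p ≠ w) :
    ∃ σ : Equiv.Perm (Fin 4),
      ∀ i : Fin 4, p ∈ diskD (![x, y, z, w] (σ i)) (![x, y, z, w] (σ (i + 1))) :=
  convex_quadrilateral_diagonal_point_tverberg_general x y z w p hp₁ hp₂
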